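/- If a Schauder basis B of a Banach space X has Property (Q*) with constant C, then B is C-suppression unconditional and has Property (A) with constant C. Conversely, if B is K-suppression unconditional and has Property (A) with constant C, then B has Property (Q*) with constant KC. -/

import Mathlib

open Filter

/-!
(Q*) with `z = 0` is suppression unconditionality on finitely supported vectors (after
rescaling to meet the bound `‖x̃‖_∞ ≤ 1`), which passes to all of `X` through the basis
expansion; (A) is the special case of (Q*) where `z` and `y` are sign vectors. Conversely,
by convexity of the norm the coefficients of `z` can be replaced by signs without decreasing
`‖x + z‖`; (A) then trades them for `|supp z|` unimodular coordinates of `y`, and suppression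
puts back the rest of `y`.
-/

/-- The vector with finitely many coefficients `c` with respect to the sequence `(e_n)`. -/
noncomputable def vec {X : Type*} [NormedAddCommGroup X] [NormedSpace ℝ X]
    (e : ℕ → X) (c : ℕ →₀ ℝ) : X := ∑ n ∈ c.support, c n • e n

/-- Property (Q*) with constant `C`: `‖x + z‖ ≤ C ‖x + y‖` for all finitely supported
`x, z, y` with pairwise disjoint supports, `max{‖x̃‖_∞, ‖z̃‖_∞} ≤ 1` and `y ∈ Γ_z`,
where `y ∈ Γ_z` means `|supp(z)| ≤ |{n : |e*_n(y)| = 1}|`. -/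
def PropQstar {X : Type*} [NormedAddCommGroup X] [NormedSpace ℝ X] (e : ℕ → X) (C : ℝ) : Prop :=
  ∀ (c z y : ℕ →₀ ℝ), Disjoint c.support z.support → Disjoint c.support y.support →
    Disjoint z.support y.support → (∀ n, |c n| ≤ 1) → (∀ n, |z n| ≤ 1) →
    z.support.card ≤ (y.support.filter fun n => |y n| = 1).card →
    ‖vec e c + vec e z‖ ≤ C * ‖vec e c + vec e y‖

/-- Property (A) with constant `C`: `‖x + 1_{εA}‖ ≤ C ‖x + 1_{ε'B}‖` for all signs `ε, ε'`,
disjoint finite `A, B` with `|A| = |B|`, and finitely supported `x` with `‖x̃‖_∞ ≤ 1` and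
`supp(x) ∩ (A ∪ B) = ∅`. -/
def PropA {X : Type*} [NormedAddCommGroup X] [NormedSpace ℝ X] (e : ℕ → X) (C : ℝ) : Prop :=
  ∀ (A B : Finset ℕ) (ε ε' : ℕ → ℝ) (c : ℕ →₀ ℝ), A.card = B.card → Disjoint A B →
    (∀ n ∈ A, ε n = 1 ∨ ε n = -1) → (∀ n ∈ B, ε' n = 1 ∨ ε' n = -1) →
    (∀ n, |c n| ≤ 1) → Disjoint c.support (A ∪ B) →
    ‖vec e c + ∑ n ∈ A, ε n • e n‖ ≤ C * ‖vec e c + ∑ n ∈ B, ε' n • e n‖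

section Vec

variable {X : Type*} [NormedAddCommGroup X] [NormedSpace ℝ X] (e : ℕ → X)

lemma vec_eq_sum_of_support_subset {u : ℕ →₀ ℝ} {S : Finset ℕ} (h : u.support ⊆ S) :
    vec e u = ∑ n ∈ S, u n • e n :=
  Finset.sum_subset h fun n _ hn => by simp [Finsupp.notMem_support_iff.mp hn]

@[simp]
lemma vec_zero : vec e 0 = 0 := by simp [vec]

lemma vec_add (u v : ℕ →₀ ℝ) : vec e (u + v) = vec e u + vec e v := by
  classical
  rw [vec_eq_sum_of_support_subset e Finsupp.support_add,
    vec_eq_sum_of_support_subset e (Finset.subset_union_left (s₂ := v.support)),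
    vec_eq_sum_of_support_subset e (Finset.subset_union_right (s₁ := u.support)),
    ← Finset.sum_add_distrib]
  simp only [Finsupp.add_apply, add_smul]

lemma vec_smul (t : ℝ) (u : ℕ →₀ ℝ) : vec e (t • u) = t • vec e u := by
  rw [vec_eq_sum_of_support_subset e Finsupp.support_smul, vec, Finset.smul_sum]
  simp only [Finsupp.smul_apply, smul_eq_mul, mul_smul]

lemma vec_indicator (S : Finset ℕ) (a : ℕ → ℝ) :
    vec e (Finsupp.indicator S fun n _ => a n) = ∑ n ∈ S, a n • e n := by
  rw [vec_eq_sum_of_support_subset e (Finsupp.support_indicator_subset _ _)]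
  exact Finset.sum_congr rfl fun n hn => by rw [Finsupp.indicator_of_mem hn]

lemma apply_vec_of_biorthogonal (f : ℕ → X →L[ℝ] ℝ)
    (hbi : ∀ m n : ℕ, f m (e n) = if m = n then 1 else 0) (u : ℕ →₀ ℝ) (m : ℕ) :
    f m (vec e u) = u m := by
  simp only [vec, map_sum, map_smul, hbi, smul_eq_mul, mul_ite, mul_one, mul_zero,
    Finset.sum_ite_eq, Finsupp.mem_support_iff]
  split_ifs with h
  · rfl
  · exact (not_not.mp h).symm

end Vec

section Signs

variable {X : Type*} [NormedAddCommGroup X] [NormedSpace ℝ X]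

lemma exists_sign_norm_add_smul_le (v w : X) {r : ℝ} (hr : |r| ≤ 1) :
    ∃ t : ℝ, (t = 1 ∨ t = -1) ∧ ‖v + r • w‖ ≤ ‖v + t • w‖ := by
  have hseg : v + r • w ∈ segment ℝ (v - w) (v + w) := by
    rw [segment_eq_image']
    refine ⟨(1 + r) / 2, ⟨?_, ?_⟩, by module⟩ <;> linarith [abs_le.mp hr]
  have hmax := convexOn_univ_norm.le_on_segment (Set.mem_univ _) (Set.mem_univ _) hseg
  rcases le_total ‖v - w‖ ‖v + w‖ with h | h
  · exact ⟨1, .inl rfl, by simpa only [one_smul] using hmax.trans_eq (max_eq_right h)⟩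
  · exact ⟨-1, .inr rfl, by
      simpa only [neg_one_smul, ← sub_eq_add_neg] using hmax.trans_eq (max_eq_left h)⟩

lemma exists_signs_norm_add_sum_le (v : ℕ → X) (a : ℕ → ℝ) (S : Finset ℕ)
    (ha : ∀ n ∈ S, |a n| ≤ 1) (u : X) :
    ∃ ε : ℕ → ℝ, (∀ n ∈ S, ε n = 1 ∨ ε n = -1) ∧
      ‖u + ∑ n ∈ S, a n • v n‖ ≤ ‖u + ∑ n ∈ S, ε n • v n‖ := by
  classical
  induction S using Finset.induction_on generalizing u with
  | empty => exact ⟨fun _ => 1, by simp⟩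
  | insert i s hi ih =>
    obtain ⟨ε, hε, hle⟩ := ih (fun n hn => ha n (Finset.mem_insert_of_mem hn)) (u + a i • v i)
    obtain ⟨t, ht, hlet⟩ :=
      exists_sign_norm_add_smul_le (u + ∑ n ∈ s, ε n • v n) (v i)
        (ha i (Finset.mem_insert_self i s))
    have hupdate : ∑ n ∈ s, Function.update ε i t n • v n = ∑ n ∈ s, ε n • v n :=
      Finset.sum_congr rfl fun n hn => by rw [Function.update_of_ne (ne_of_mem_of_not_mem hn hi)]
    refine ⟨Function.update ε i t, fun n hn => ?_, ?_⟩
    · rcases Finset.mem_insert.mp hn with rfl | hn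
      · simpa using ht
      · rw [Function.update_of_ne (ne_of_mem_of_not_mem hn hi)]
        exact hε n hn
    · calc ‖u + ∑ n ∈ insert i s, a n • v n‖ = ‖(u + a i • v i) + ∑ n ∈ s, a n • v n‖ := by
            rw [Finset.sum_insert hi, add_assoc]
        _ ≤ ‖(u + a i • v i) + ∑ n ∈ s, ε n • v n‖ := hle
        _ = ‖(u + ∑ n ∈ s, ε n • v n) + a i • v i‖ := by rw [add_right_comm]
        _ ≤ ‖(u + ∑ n ∈ s, ε n • v n) + t • v i‖ := hlet
        _ = ‖u + ∑ n ∈ insert i s, Function.update ε i t n • v n‖ := by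
            rw [Finset.sum_insert hi, hupdate, Function.update_self, add_right_comm, add_assoc]

end Signs

section Properties

variable {X : Type*} [NormedAddCommGroup X] [NormedSpace ℝ X] {e : ℕ → X} {C K : ℝ}

def SuppressionUnconditional (e : ℕ → X) (f : ℕ → X →L[ℝ] ℝ) (K : ℝ) : Prop :=
  ∀ (z : X) (M : Finset ℕ), ‖∑ n ∈ M, f n z • e n‖ ≤ K * ‖z‖

lemma Finsupp.exists_pos_abs_smul_apply_le_one {α : Type*} (c : α →₀ ℝ) :
    ∃ t : ℝ, 0 < t ∧ ∀ n, |(t • c) n| ≤ 1 := by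
  set S := ∑ n ∈ c.support, |c n|
  have hS : 0 ≤ S := Finset.sum_nonneg fun n _ => abs_nonneg _
  refine ⟨(1 + S)⁻¹, by positivity, fun n => ?_⟩
  have hcn : |c n| ≤ S := by
    by_cases hn : n ∈ c.support
    · exact Finset.single_le_sum (f := fun n => |c n|) (fun _ _ => abs_nonneg _) hn
    · simpa [Finsupp.notMem_support_iff.mp hn] using hS
  rw [Finsupp.smul_apply, smul_eq_mul, abs_mul, abs_of_pos (by positivity),
    inv_mul_le_one₀ (by positivity)]
  linarith

lemma PropQstar.norm_vec_le (hQ : PropQstar e C) {c y : ℕ →₀ ℝ}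
    (hcy : Disjoint c.support y.support) : ‖vec e c‖ ≤ C * ‖vec e c + vec e y‖ := by
  obtain ⟨t, ht, htc⟩ := c.exists_pos_abs_smul_apply_le_one
  have h := hQ (t • c) 0 (t • y) (by simp)
    ((hcy.mono_left Finsupp.support_smul).mono_right Finsupp.support_smul) (by simp) htc
    (by simp) (by simp)
  rw [vec_smul, vec_smul, vec_zero, add_zero, ← smul_add, norm_smul, norm_smul,
    Real.norm_of_nonneg ht.le] at h
  exact (mul_le_mul_iff_right₀ ht).mp (by linarith)

lemma PropQstar.norm_sum_le_of_subset (hQ : PropQstar e C) (a : ℕ → ℝ) {M S : Finset ℕ}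
    (hMS : M ⊆ S) : ‖∑ n ∈ M, a n • e n‖ ≤ C * ‖∑ n ∈ S, a n • e n‖ := by
  have h := hQ.norm_vec_le (c := Finsupp.indicator M fun n _ => a n)
    (y := Finsupp.indicator (S \ M) fun n _ => a n)
    (Finset.sdiff_disjoint.symm.mono (Finsupp.support_indicator_subset _ _)
      (Finsupp.support_indicator_subset _ _))
  rwa [vec_indicator, vec_indicator, add_comm, Finset.sum_sdiff hMS] at h

lemma suppressionUnconditional_of_norm_sum_le (f : ℕ → X →L[ℝ] ℝ)
    (hexp : ∀ z : X, Tendsto (fun N => ∑ n ∈ Finset.range N, f n z • e n) atTop (nhds z))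
    (h : ∀ (a : ℕ → ℝ) (M S : Finset ℕ), M ⊆ S →
      ‖∑ n ∈ M, a n • e n‖ ≤ C * ‖∑ n ∈ S, a n • e n‖) :
    SuppressionUnconditional e f C := by
  intro z M
  obtain ⟨N₀, hN₀⟩ := M.exists_nat_subset_range
  refine ge_of_tendsto ((hexp z).norm.const_mul C) ?_
  filter_upwards [eventually_ge_atTop N₀] with N hN
  exact h (fun n => f n z) M _ (hN₀.trans (Finset.range_subset_range.mpr hN))

lemma PropQstar.propA (hQ : PropQstar e C) : PropA e C := by
  intro A B ε ε' c hcard hAB hε hε' hc hcAB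
  have hsign {S : Finset ℕ} {s : ℕ → ℝ} (hs : ∀ n ∈ S, s n = 1 ∨ s n = -1) {n : ℕ}
      (hn : n ∈ S) : |(Finsupp.indicator S fun n _ => s n) n| = 1 := by
    rw [Finsupp.indicator_of_mem hn]
    rcases hs n hn with h | h <;> simp [h]
  have hz : ∀ n, |(Finsupp.indicator A fun n _ => ε n) n| ≤ 1 := fun n => by
    by_cases hn : n ∈ A
    · exact (hsign hε hn).le
    · simp [Finsupp.indicator_of_notMem hn]
  have hcardz : (Finsupp.indicator A fun n _ => ε n).support.card ≤
      ((Finsupp.indicator B fun n _ => ε' n).support.filter fun n =>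
        |(Finsupp.indicator B fun n _ => ε' n) n| = 1).card := by
    refine (Finset.card_le_card (Finsupp.support_indicator_subset _ _)).trans
      (hcard.trans_le (Finset.card_le_card fun n hn => ?_))
    have h1 := hsign hε' hn
    exact Finset.mem_filter.mpr ⟨Finsupp.mem_support_iff.mpr fun h0 => by simp [h0] at h1, h1⟩
  have h := hQ c _ _
    ((Finset.disjoint_union_right.mp hcAB).1.mono_right (Finsupp.support_indicator_subset _ _))
    ((Finset.disjoint_union_right.mp hcAB).2.mono_right (Finsupp.support_indicator_subset _ _))
    (hAB.mono (Finsupp.support_indicator_subset _ _) (Finsupp.support_indicator_subset _ _))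
    hc hz hcardz
  rwa [vec_indicator, vec_indicator] at h

lemma PropA.one_le (hA : PropA e C) {m : ℕ} (hm : e m ≠ 0) : 1 ≤ C := by
  have h := hA ∅ ∅ 1 1 (Finsupp.single m 1) rfl (Finset.disjoint_empty_left _) (by simp)
    (by simp) (fun n => by rw [Finsupp.single_apply]; split_ifs <;> simp) (by simp)
  simp only [vec, Finsupp.support_single m one_ne_zero, Finset.sum_singleton,
    Finsupp.single_eq_same, one_smul, Finset.sum_empty, add_zero] at h
  exact le_of_mul_le_mul_right (by simpa using h) (norm_pos_iff.mpr hm)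

lemma SuppressionUnconditional.norm_sum_le {f : ℕ → X →L[ℝ] ℝ} (hK : SuppressionUnconditional e f K)
    (hbi : ∀ m n : ℕ, f m (e n) = if m = n then 1 else 0) (u : ℕ →₀ ℝ) (M : Finset ℕ) :
    ‖∑ n ∈ M, u n • e n‖ ≤ K * ‖vec e u‖ := by
  simpa only [apply_vec_of_biorthogonal e f hbi] using hK (vec e u) M

lemma PropA.propQstar {f : ℕ → X →L[ℝ] ℝ} (hA : PropA e C) (hK : SuppressionUnconditional e f K)
    (hbi : ∀ m n : ℕ, f m (e n) = if m = n then 1 else 0) : PropQstar e (K * C) := by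
  intro c z y hcz hcy hzy hc hz hcard
  obtain ⟨B, hBsub, hBcard⟩ := Finset.exists_subset_card_eq hcard
  have hBy : B ⊆ y.support := hBsub.trans (Finset.filter_subset _ _)
  have hBsign : ∀ n ∈ B, y n = 1 ∨ y n = -1 := fun n hn =>
    (abs_eq zero_le_one).mp (Finset.mem_filter.mp (hBsub hn)).2
  obtain ⟨ε, hε, hzε⟩ := exists_signs_norm_add_sum_le e z z.support (fun n _ => hz n) (vec e c)
  have hC : 0 ≤ C := zero_le_one.trans (hA.one_le (m := 0) fun h => by simpa [h] using hbi 0 0)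
  have hrestrict : vec e c + ∑ n ∈ B, y n • e n = ∑ n ∈ c.support ∪ B, (c + y) n • e n := by
    simp only [Finsupp.add_apply, add_smul, Finset.sum_add_distrib]
    rw [vec_eq_sum_of_support_subset e Finset.subset_union_left]
    refine congrArg _ (Finset.sum_subset Finset.subset_union_right fun n hn hnB => ?_)
    have hnc : n ∈ c.support := (Finset.mem_union.mp hn).resolve_right hnB
    rw [Finsupp.notMem_support_iff.mp (Finset.disjoint_left.mp hcy hnc), zero_smul]
  calc ‖vec e c + vec e z‖ ≤ ‖vec e c + ∑ n ∈ z.support, ε n • e n‖ := hzε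
    _ ≤ C * ‖vec e c + ∑ n ∈ B, y n • e n‖ :=
        hA z.support B ε y c hBcard.symm (hzy.mono_right hBy) hε hBsign hc
          (Finset.disjoint_union_right.mpr ⟨hcz, hcy.mono_right hBy⟩)
    _ ≤ C * (K * ‖vec e c + vec e y‖) := by
        rw [hrestrict, ← vec_add]
        exact mul_le_mul_of_nonneg_left (hK.norm_sum_le hbi _ _) hC
    _ = K * C * ‖vec e c + vec e y‖ := by ring

end Properties

theorem stmt_15_general {X : Type*} [NormedAddCommGroup X] [NormedSpace ℝ X]
    (e : ℕ → X) (f : ℕ → X →L[ℝ] ℝ)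
    (hbi : ∀ m n : ℕ, f m (e n) = if m = n then 1 else 0)
    (hexp : ∀ z : X, Tendsto (fun N => ∑ n ∈ Finset.range N, f n z • e n) atTop (nhds z))
    (C K : ℝ) :
    (PropQstar e C →
      (∀ (z : X) (M : Finset ℕ), ‖∑ n ∈ M, f n z • e n‖ ≤ C * ‖z‖) ∧ PropA e C) ∧
    ((∀ (z : X) (M : Finset ℕ), ‖∑ n ∈ M, f n z • e n‖ ≤ K * ‖z‖) → PropA e C →
      PropQstar e (K * C)) :=
  ⟨fun hQ => ⟨suppressionUnconditional_of_norm_sum_le f hexp fun a _ _ =>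
      hQ.norm_sum_le_of_subset a, hQ.propA⟩,
    fun hK hA => hA.propQstar hK hbi⟩

/-- Remark 1.5: Property (Q*) with constant `C` implies `C`-suppression unconditionality and
Property (A) with constant `C`; conversely, `K`-suppression unconditionality together with
Property (A) with constant `C` implies Property (Q*) with constant `KC`. -/
theorem stmt_15 {X : Type*} [NormedAddCommGroup X] [NormedSpace ℝ X] [CompleteSpace X]
    (e : ℕ → X) (f : ℕ → X →L[ℝ] ℝ)
    (hbi : ∀ m n : ℕ, f m (e n) = if m = n then 1 else 0)
    (hexp : ∀ z : X, Tendsto (fun N => ∑ n ∈ Finset.range N, f n z • e n) atTop (nhds z))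
    (C K : ℝ) :
    (PropQstar e C →
      (∀ (z : X) (M : Finset ℕ), ‖∑ n ∈ M, f n z • e n‖ ≤ C * ‖z‖) ∧ PropA e C) ∧
    ((∀ (z : X) (M : Finset ℕ), ‖∑ n ∈ M, f n z • e n‖ ≤ K * ‖z‖) → PropA e C →
      PropQstar e (K * C)) :=
  stmt_15_general e f hbi hexp C K
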